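/- The row vector v₂ := (1, (3+√13)/2, −(5+√13)/2, −(5+√13)/2, (3+√13)/2, 1) satisfies v₂·M = λ₂·v₂, where λ₂ := −(1+√13)/6. -/
import Mathlib


/-- The doubly stochastic matrix `M` of the piecewise linear example. -/
noncomputable def Mmat : Matrix (Fin 6) (Fin 6) ℝ :=
  !![2/3, 1/3, 0, 0, 0, 0;
     0, 0, 1/2, 1/2, 0, 0;
     0, 0, 0, 0, 2/3, 1/3;
     1/3, 2/3, 0, 0, 0, 0;
     0, 0, 1/2, 1/2, 0, 0;
     0, 0, 0, 0, 1/3, 2/3]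

/-- The row vector `v₂ = (1, (3+√13)/2, −(5+√13)/2, −(5+√13)/2, (3+√13)/2, 1)`
satisfies `v₂ M = λ₂ v₂` with `λ₂ = −(1+√13)/6`. -/
theorem stmt13 :
    Matrix.vecMul
        ![(1 : ℝ), (3 + Real.sqrt 13) / 2, -((5 + Real.sqrt 13) / 2),
          -((5 + Real.sqrt 13) / 2), (3 + Real.sqrt 13) / 2, 1] Mmat =
      (-(1 + Real.sqrt 13) / 6) •
        ![(1 : ℝ), (3 + Real.sqrt 13) / 2, -((5 + Real.sqrt 13) / 2),
          -((5 + Real.sqrt 13) / 2), (3 + Real.sqrt 13) / 2, 1] := by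
  have h : Real.sqrt 13 ^ 2 = 13 := Real.sq_sqrt (by norm_num)
  funext i
  fin_cases i <;>
    simp [Mmat, Matrix.vecMul, dotProduct, Fin.sum_univ_succ, show (5:Fin 6) = Fin.succ 4 from rfl, Matrix.cons_val_succ] <;>
    nlinarith [h, Real.sqrt_nonneg 13]
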